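/- arXiv:1701.07947 — 5 statements merged into one kernel-verified Lean document; each statement's English description precedes it below -/
import Mathlib

section
/- If Δ ≠ 0, then the polynomials φ(x) = x⁴ − b₄x² − 2b₆x − b₈ and ψ(x) = 4x³ + b₂x² + 2b₄x + b₆ are coprime in K[x]; equivalently, the homogeneous map F(z,w) = (z⁴ − b₄z²w² − 2b₆zw³ − b₈w⁴, 4z³w + b₂z²w² + 2b₄zw³ + b₆w⁴) has no common zero other than (0,0) in L² for any field extension L of K. -/
open Polynomial

theorem isCoprime_of_isUnit_mul_add_mul {R : Type*} [CommSemiring R] {a b u v : R}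
    (h : IsUnit (u * a + v * b)) : IsCoprime a b := by
  obtain ⟨c, hc⟩ := h.exists_left_inv
  exact ⟨c * u, c * v, by rw [mul_assoc, mul_assoc, ← mul_add, hc]⟩

theorem IsCoprime.aeval_ne_zero_of_aeval_eq_zero {R L : Type*} [CommRing R] [CommRing L]
    [Nontrivial L] [Algebra R L] {p q : R[X]} (h : IsCoprime p q) {x : L}
    (hp : aeval x p = 0) : aeval x q ≠ 0 := fun hq =>
  not_isCoprime_zero_zero (hp ▸ hq ▸ h.map (aeval x).toRingHom)

namespace WeierstrassCurve

section CommRing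

variable {R : Type*} [CommRing R] (W : WeierstrassCurve R)

/- Dividing the Bézout identity for the resultant `Res(Φ₂, Ψ₂²) = Δ²` by `Δ` leaves these
small cofactors; the identity is one in `ℤ[a₁, a₂, a₃, a₄, a₆][X]`. -/
theorem C_Δ_eq_mul_Φ_two_add_mul_Ψ₂Sq :
    C W.Δ = (C (-48) * X ^ 2 - C (8 * W.b₂) * X + C (W.b₂ ^ 2 - 32 * W.b₄)) * W.Φ 2 +
      (C 12 * X ^ 3 - C W.b₂ * X ^ 2 - C (10 * W.b₄) * X + C (W.b₂ * W.b₄ - 27 * W.b₆)) *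
        W.Ψ₂Sq := by
  simp only [Φ_two, Ψ₂Sq, Δ, b₂, b₄, b₆, b₈, map_add, map_mul, map_sub, map_neg, map_pow,
    map_ofNat]
  ring

theorem isCoprime_Φ_two_Ψ₂Sq [W.IsElliptic] : IsCoprime (W.Φ 2) W.Ψ₂Sq :=
  isCoprime_of_isUnit_mul_add_mul (W.C_Δ_eq_mul_Φ_two_add_mul_Ψ₂Sq ▸ W.isUnit_Δ.map C)

end CommRing

section Field

variable {K L : Type*} [Field K] [Field L] [Algebra K L] (W : WeierstrassCurve K) {w : L}

theorem pow_mul_aeval_div_Φ_two (z : L) (hw : w ≠ 0) :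
    w ^ 4 * aeval (z / w) (W.Φ 2) = z ^ 4 - algebraMap K L W.b₄ * z ^ 2 * w ^ 2 -
      algebraMap K L (2 * W.b₆) * z * w ^ 3 - algebraMap K L W.b₈ * w ^ 4 := by
  simp only [Φ_two, map_sub, map_mul, map_pow, aeval_X, aeval_C]
  field_simp

theorem pow_mul_aeval_div_Ψ₂Sq (z : L) (hw : w ≠ 0) :
    w ^ 4 * aeval (z / w) W.Ψ₂Sq = 4 * z ^ 3 * w + algebraMap K L W.b₂ * z ^ 2 * w ^ 2 +
      algebraMap K L (2 * W.b₄) * z * w ^ 3 + algebraMap K L W.b₆ * w ^ 4 := by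
  simp only [Ψ₂Sq, map_add, map_mul, map_pow, aeval_X, aeval_C, map_ofNat]
  field_simp

end Field

end WeierstrassCurve

theorem phi_psi_coprime_general {K : Type*} [Field K] (W : WeierstrassCurve K)
    (hΔ : W.Δ ≠ 0) :
    IsCoprime (X ^ 4 - C W.b₄ * X ^ 2 - C (2 * W.b₆) * X - C W.b₈ : K[X])
        (C 4 * X ^ 3 + C W.b₂ * X ^ 2 + C (2 * W.b₄) * X + C W.b₆ : K[X]) ∧
      ∀ (L : Type*) [Field L] [Algebra K L] (z w : L),
        z ^ 4 - algebraMap K L W.b₄ * z ^ 2 * w ^ 2 - algebraMap K L (2 * W.b₆) * z * w ^ 3 -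
              algebraMap K L W.b₈ * w ^ 4 = 0 →
          4 * z ^ 3 * w + algebraMap K L W.b₂ * z ^ 2 * w ^ 2 +
              algebraMap K L (2 * W.b₄) * z * w ^ 3 + algebraMap K L W.b₆ * w ^ 4 = 0 →
            z = 0 ∧ w = 0 := by
  have : W.IsElliptic := ⟨hΔ.isUnit⟩
  have hcop := W.isCoprime_Φ_two_Ψ₂Sq
  refine ⟨W.Φ_two ▸ hcop, fun L _ _ z w hφ hψ => ?_⟩
  by_cases hw : w = 0
  · subst hw
    exact ⟨pow_eq_zero_iff four_ne_zero |>.mp (by linear_combination hφ), rfl⟩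
  · have hφ_root : aeval (z / w) (W.Φ 2) = 0 := by
      simpa [hw] using (W.pow_mul_aeval_div_Φ_two z hw).trans hφ
    have hψ_root : aeval (z / w) W.Ψ₂Sq = 0 := by
      simpa [hw] using (W.pow_mul_aeval_div_Ψ₂Sq z hw).trans hψ
    exact absurd hψ_root (hcop.aeval_ne_zero_of_aeval_eq_zero hφ_root)

/-- If `Δ ≠ 0`, then `φ(x) = x⁴ − b₄x² − 2b₆x − b₈` and `ψ(x) = 4x³ + b₂x² + 2b₄x + b₆`
are coprime in `K[x]`; equivalently, the homogeneous map
`F(z,w) = (z⁴ − b₄z²w² − 2b₆zw³ − b₈w⁴, 4z³w + b₂z²w² + 2b₄zw³ + b₆w⁴)` has no common zero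
other than `(0,0)` in `L²` for any field extension `L` of `K`. -/
theorem phi_psi_coprime {K : Type*} [Field K] [CharZero K] (W : WeierstrassCurve K)
    (hΔ : W.Δ ≠ 0) :
    IsCoprime (X ^ 4 - C W.b₄ * X ^ 2 - C (2 * W.b₆) * X - C W.b₈ : K[X])
        (C 4 * X ^ 3 + C W.b₂ * X ^ 2 + C (2 * W.b₄) * X + C W.b₆ : K[X]) ∧
      ∀ (L : Type*) [Field L] [Algebra K L] (z w : L),
        z ^ 4 - algebraMap K L W.b₄ * z ^ 2 * w ^ 2 - algebraMap K L (2 * W.b₆) * z * w ^ 3 -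
              algebraMap K L W.b₈ * w ^ 4 = 0 →
          4 * z ^ 3 * w + algebraMap K L W.b₂ * z ^ 2 * w ^ 2 +
              algebraMap K L (2 * W.b₄) * z * w ^ 3 + algebraMap K L W.b₆ * w ^ 4 = 0 →
            z = 0 ∧ w = 0 :=
  phi_psi_coprime_general W hΔ
end

section
/- For every (z,w) ∈ ℂ² ∖ {(0,0)}, the limit G_F(z,w) = lim_{n→∞} 4^{−n} log ‖Fⁿ(z,w)‖ exists; moreover the convergence is uniform on ℂ² ∖ {(0,0)}, and there is a constant C ≥ 0 such that |G_F(z,w) − log ‖(z,w)‖| ≤ C for all (z,w) ≠ (0,0). -/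
/-!
Since `F` is homogeneous of degree 4 and vanishes only at the origin, `‖F X‖ / ‖X‖⁴` is a
continuous function on the unit sphere without zeros, hence pinched between two positive
constants; so `log ‖F X‖ = 4 log ‖X‖ + O(1)` uniformly on `ℂ² ∖ {0}`. Consequently consecutive
terms of `4⁻ⁿ log ‖Fⁿ X‖` differ by `O(4⁻ⁿ)` uniformly in `X`, and the sequence converges
uniformly, with its limit within `O(1)` of the initial term `log ‖X‖`.
-/

open MvPolynomial Filter

noncomputable def liftMap (P Q : MvPolynomial (Fin 2) ℂ) : ℂ × ℂ → ℂ × ℂ :=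
  fun X => (eval ![X.1, X.2] P, eval ![X.1, X.2] Q)

theorem MvPolynomial.IsHomogeneous.eval_smul {R σ : Type*} [CommSemiring R]
    {φ : MvPolynomial σ R} {n : ℕ} (hφ : φ.IsHomogeneous n) (c : R) (x : σ → R) :
    eval (c • x) φ = c ^ n * eval x φ := by
  rw [eval_eq, eval_eq, Finset.mul_sum]
  refine Finset.sum_congr rfl fun e he => ?_
  have hdeg : e.degree = n := by
    by_contra h
    exact mem_support_iff.mp he (hφ.coeff_eq_zero h)
  simp only [Pi.smul_apply, smul_eq_mul, mul_pow, Finset.prod_mul_distrib,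
    Finset.prod_pow_eq_pow_sum, ← Finsupp.degree_apply, hdeg]
  ring

theorem Real.abs_log_sub_log_le_of_mul_le_of_le_mul {a b m M : ℝ} (ha : 0 < a) (hm : 0 < m)
    (hlow : m * a ≤ b) (hup : b ≤ M * a) :
    |Real.log b - Real.log a| ≤ max |Real.log m| |Real.log M| := by
  have hb : 0 < b := (mul_pos hm ha).trans_le hlow
  have hlog_low : Real.log m + Real.log a ≤ Real.log b := by
    rw [← Real.log_mul hm.ne' ha.ne']
    exact Real.log_le_log (by positivity) hlow
  have hM : 0 < M := pos_of_mul_pos_left (hb.trans_le hup) ha.le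
  have hlog_up : Real.log b ≤ Real.log M + Real.log a := by
    rw [← Real.log_mul hM.ne' ha.ne']
    exact Real.log_le_log hb hup
  rw [abs_le]
  constructor
  · linarith [neg_abs_le (Real.log m), le_max_left |Real.log m| |Real.log M|]
  · linarith [le_abs_self (Real.log M), le_max_right |Real.log m| |Real.log M|]

section HomogeneousMap

variable {𝕜 E E' : Type*} [RCLike 𝕜] [NormedAddCommGroup E] [NormedSpace 𝕜 E]
  [NormedAddCommGroup E'] [NormedSpace 𝕜 E'] {F : E → E'} {d : ℕ}

theorem norm_eq_norm_pow_mul_norm_inv_norm_smul (hF : ∀ (c : 𝕜) (x : E), F (c • x) = c ^ d • F x)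
    {x : E} (hx : x ≠ 0) :
    ‖F x‖ = ‖x‖ ^ d * ‖F ((‖x‖⁻¹ : 𝕜) • x)‖ := by
  have hx' : (‖x‖ : 𝕜) ≠ 0 := by simpa using hx
  conv_lhs => rw [← smul_inv_smul₀ hx' x]
  rw [hF, norm_smul, norm_pow, RCLike.norm_ofReal, abs_norm]

variable [ProperSpace E]

theorem exists_mul_pow_le_norm_le_mul_pow (hF : ∀ (c : 𝕜) (x : E), F (c • x) = c ^ d • F x)
    (hcont : Continuous F) (hzero : ∀ x, F x = 0 → x = 0) :
    ∃ m M : ℝ, 0 < m ∧ ∀ x ≠ 0, m * ‖x‖ ^ d ≤ ‖F x‖ ∧ ‖F x‖ ≤ M * ‖x‖ ^ d := by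
  have hsphere {x : E} (hx : x ≠ 0) : (‖x‖⁻¹ : 𝕜) • x ∈ Metric.sphere (0 : E) 1 :=
    mem_sphere_zero_iff_norm.mpr (norm_smul_inv_norm hx)
  rcases subsingleton_or_nontrivial E with hE | hE
  · exact ⟨1, 0, one_pos, fun x hx => (hx (Subsingleton.elim x 0)).elim⟩
  obtain ⟨x₀, hx₀⟩ := exists_ne (0 : E)
  obtain ⟨y₁, hy₁, hmin⟩ := (isCompact_sphere (0 : E) 1).exists_isMinOn ⟨_, hsphere hx₀⟩
    (continuous_norm.comp hcont).continuousOn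
  obtain ⟨y₂, -, hmax⟩ := (isCompact_sphere (0 : E) 1).exists_isMaxOn ⟨_, hsphere hx₀⟩
    (continuous_norm.comp hcont).continuousOn
  have hy₁ : y₁ ≠ 0 := ne_zero_of_mem_unit_sphere ⟨y₁, hy₁⟩
  refine ⟨‖F y₁‖, ‖F y₂‖, norm_pos_iff.mpr fun h => hy₁ (hzero y₁ h), fun x hx => ?_⟩
  rw [norm_eq_norm_pow_mul_norm_inv_norm_smul hF hx, mul_comm _ (‖x‖ ^ d), mul_comm _ (‖x‖ ^ d)]
  exact ⟨by gcongr; exact hmin (hsphere hx), by gcongr; exact hmax (hsphere hx)⟩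

theorem exists_abs_log_norm_sub_le (hF : ∀ (c : 𝕜) (x : E), F (c • x) = c ^ d • F x)
    (hcont : Continuous F) (hzero : ∀ x, F x = 0 → x = 0) :
    ∃ K : ℝ, 0 ≤ K ∧ ∀ x ≠ 0, |Real.log ‖F x‖ - d * Real.log ‖x‖| ≤ K := by
  obtain ⟨m, M, hm, hbounds⟩ := exists_mul_pow_le_norm_le_mul_pow hF hcont hzero
  refine ⟨max |Real.log m| |Real.log M|, (abs_nonneg _).trans (le_max_left _ _), fun x hx => ?_⟩
  rw [← Real.log_pow]
  exact Real.abs_log_sub_log_le_of_mul_le_of_le_mul (by positivity) hm (hbounds x hx).1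
    (hbounds x hx).2

end HomogeneousMap

section EscapeRate

variable {α : Type*} {f : α → α} {φ : α → ℝ} {s : Set α} {d K : ℝ}

theorem dist_div_pow_iterate_succ_le (hd : 0 < d) (hs : Set.MapsTo f s s)
    (hφ : ∀ x ∈ s, |φ (f x) - d * φ x| ≤ K) {x : α} (hx : x ∈ s) (n : ℕ) :
    dist (φ (f^[n] x) / d ^ n) (φ (f^[n + 1] x) / d ^ (n + 1)) ≤ K / d * (1 / d) ^ n := by
  have hdn : 0 < d ^ (n + 1) := by positivity
  have hstep : φ (f^[n] x) / d ^ n - φ (f^[n + 1] x) / d ^ (n + 1)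
      = -(φ (f (f^[n] x)) - d * φ (f^[n] x)) / d ^ (n + 1) := by
    rw [Function.iterate_succ_apply']
    field_simp
    ring
  rw [Real.dist_eq, hstep, abs_div, abs_neg, abs_of_pos hdn, div_le_iff₀ hdn]
  calc |φ (f (f^[n] x)) - d * φ (f^[n] x)| ≤ K := hφ _ (hs.iterate n hx)
    _ = K / d * (1 / d) ^ n * d ^ (n + 1) := by rw [one_div_pow, pow_succ]; field_simp

theorem exists_tendstoUniformlyOn_div_pow_iterate (hd : 1 < d) (hs : Set.MapsTo f s s)
    (hφ : ∀ x ∈ s, |φ (f x) - d * φ x| ≤ K) :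
    ∃ G : α → ℝ, TendstoUniformlyOn (fun n x => φ (f^[n] x) / d ^ n) G atTop s ∧
      ∀ x ∈ s, |G x - φ x| ≤ K / (d - 1) := by
  have hd₀ : 0 < d := zero_lt_one.trans hd
  have hr : 1 / d < 1 := (div_lt_one hd₀).mpr hd
  have hdist := fun x (hx : x ∈ s) => dist_div_pow_iterate_succ_le hd₀ hs hφ hx
  have hlim : ∀ x ∈ s, Tendsto (fun n => φ (f^[n] x) / d ^ n) atTop
      (nhds (limUnder atTop fun n => φ (f^[n] x) / d ^ n)) := fun x hx =>
    (cauchySeq_of_le_geometric _ _ hr (hdist x hx)).tendsto_limUnder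
  set bound : ℕ → ℝ := fun n => K / d * (1 / d) ^ n / (1 - 1 / d)
  have hbound : ∀ x ∈ s, ∀ n, dist (φ (f^[n] x) / d ^ n)
      (limUnder atTop fun n => φ (f^[n] x) / d ^ n) ≤ bound n := fun x hx =>
    dist_le_of_le_geometric_of_tendsto _ _ hr (hdist x hx) (hlim x hx)
  have hbound_zero : Tendsto bound atTop (nhds 0) := by
    simpa only [mul_zero, zero_div] using
      ((tendsto_pow_atTop_nhds_zero_of_lt_one (by positivity) hr).const_mul (K / d)).div_const
        (1 - 1 / d)
  refine ⟨fun x => limUnder atTop fun n => φ (f^[n] x) / d ^ n, ?_, fun x hx => ?_⟩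
  · rw [Metric.tendstoUniformlyOn_iff]
    intro ε hε
    filter_upwards [hbound_zero.eventually (gt_mem_nhds hε)] with n hn x hx
    rw [dist_comm]
    exact (hbound x hx n).trans_lt hn
  · have h := hbound x hx 0
    have hK : bound 0 = K / (d - 1) := by
      simp only [bound]
      field_simp
    rwa [Real.dist_eq, abs_sub_comm, hK, Function.iterate_zero_apply, pow_zero, div_one] at h

end EscapeRate

theorem liftMap_smul {P Q : MvPolynomial (Fin 2) ℂ} {d : ℕ} (hP : P.IsHomogeneous d)
    (hQ : Q.IsHomogeneous d) (c : ℂ) (X : ℂ × ℂ) :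
    liftMap P Q (c • X) = c ^ d • liftMap P Q X := by
  have hvec : ![(c • X).1, (c • X).2] = c • ![X.1, X.2] := by
    ext i
    fin_cases i <;> simp
  simp only [liftMap, hvec, hP.eval_smul, hQ.eval_smul, Prod.smul_mk, smul_eq_mul]

theorem continuous_liftMap (P Q : MvPolynomial (Fin 2) ℂ) : Continuous (liftMap P Q) := by
  have hvec : Continuous fun X : ℂ × ℂ => ![X.1, X.2] :=
    continuous_pi fun i => by fin_cases i <;> fun_prop
  exact ((continuous_eval P).comp hvec).prodMk ((continuous_eval Q).comp hvec)

/-- For `F = (F₁, F₂)` with `F₁, F₂` homogeneous polynomials of degree 4 on `ℂ²` whose only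
common zero is `(0,0)`: for every `(z,w) ≠ (0,0)` the limit
`G_F(z,w) = lim_{n→∞} 4^{−n} log ‖Fⁿ(z,w)‖` exists; the convergence is uniform on
`ℂ² ∖ {(0,0)}`; and there is `C ≥ 0` with `|G_F(z,w) − log ‖(z,w)‖| ≤ C` for all
`(z,w) ≠ (0,0)`.  Here `‖(z,w)‖ = max (|z|, |w|)`. -/
theorem escape_rate_exists (P Q : MvPolynomial (Fin 2) ℂ)
    (hP : P.IsHomogeneous 4) (hQ : Q.IsHomogeneous 4)
    (hzero : ∀ X : ℂ × ℂ, liftMap P Q X = 0 → X = 0) :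
    ∃ G : ℂ × ℂ → ℝ,
      (∀ X : ℂ × ℂ, X ≠ 0 →
        Tendsto (fun n : ℕ => Real.log ‖(liftMap P Q)^[n] X‖ / 4 ^ n) atTop (nhds (G X))) ∧
      TendstoUniformlyOn (fun (n : ℕ) (X : ℂ × ℂ) => Real.log ‖(liftMap P Q)^[n] X‖ / 4 ^ n)
        G atTop {X : ℂ × ℂ | X ≠ 0} ∧
      ∃ C : ℝ, 0 ≤ C ∧ ∀ X : ℂ × ℂ, X ≠ 0 → |G X - Real.log ‖X‖| ≤ C := by
  obtain ⟨K, hK, hlog⟩ :=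
    exists_abs_log_norm_sub_le (liftMap_smul hP hQ) (continuous_liftMap P Q) hzero
  have hinv : Set.MapsTo (liftMap P Q) {X | X ≠ 0} {X | X ≠ 0} :=
    fun X hX hFX => hX (hzero X hFX)
  obtain ⟨G, hG, hGlog⟩ := exists_tendstoUniformlyOn_div_pow_iterate (d := 4)
    (φ := fun X => Real.log ‖X‖) (by norm_num) hinv
    fun X (hX : X ≠ 0) => by exact_mod_cast hlog X hX
  exact ⟨G, fun X hX => hG.tendsto_at hX, hG, K / (4 - 1), div_nonneg hK (by norm_num), hGlog⟩
end

section
/- Let U ⊆ ℂ be open, and for each t ∈ U let F_t = (F_{1,t}, F_{2,t}) : ℂ² → ℂ² be given by F_{i,t}(z,w) = Σ_{j=0}^{4} c_{i,j}(t)·z^j·w^{4−j}, where each coefficient function c_{i,j} : U → ℂ is holomorphic, and suppose that for every t ∈ U the only common zero of F_{1,t} and F_{2,t} in ℂ² is (0,0). Then the function (t, z, w) ↦ G_{F_t}(z,w) is continuous on U × (ℂ² ∖ {(0,0)}). -/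
/-
By homogeneity, `log ‖F_t Y‖ - 4 log ‖Y‖ = log ‖F_t (Y / ‖Y‖)‖`, and the right-hand side is
continuous, hence bounded, on `K × S` for every compact `K ⊆ U` (`S` the unit sphere), because
`F_t` does not vanish on `S`. So consecutive approximants `4⁻ⁿ log ‖F_tⁿ‖` differ by `O(4⁻ⁿ)`
uniformly on `K × (ℂ² ∖ {0})`; they converge uniformly there, and their limit is continuous.
-/

open Filter

/-- The family of homogeneous degree-4 maps `F_t(z,w) = (Σ_j c₀ⱼ(t)·zʲ·w⁴⁻ʲ, Σ_j c₁ⱼ(t)·zʲ·w⁴⁻ʲ)`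
determined by the coefficient functions `c : Fin 2 → Fin 5 → ℂ → ℂ`. -/
noncomputable def famLift (c : Fin 2 → Fin 5 → ℂ → ℂ) (t : ℂ) : ℂ × ℂ → ℂ × ℂ :=
  fun X => (∑ j : Fin 5, c 0 j t * X.1 ^ (j : ℕ) * X.2 ^ (4 - (j : ℕ)),
            ∑ j : Fin 5, c 1 j t * X.1 ^ (j : ℕ) * X.2 ^ (4 - (j : ℕ)))

open Topology Set

theorem tendstoUniformlyOn_of_dist_le_geometric {α β : Type*} [PseudoMetricSpace β]
    {g : ℕ → α → β} {G : α → β} {s : Set α} {C r : ℝ} (hr₀ : 0 ≤ r) (hr : r < 1)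
    (hstep : ∀ x ∈ s, ∀ n, dist (g n x) (g (n + 1) x) ≤ C * r ^ n)
    (hlim : ∀ x ∈ s, Tendsto (fun n => g n x) atTop (𝓝 (G x))) :
    TendstoUniformlyOn g G atTop s := by
  have hbound : Tendsto (fun n : ℕ => C * r ^ n / (1 - r)) atTop (𝓝 0) := by
    simpa using ((tendsto_pow_atTop_nhds_zero_of_lt_one hr₀ hr).const_mul C).div_const (1 - r)
  rw [Metric.tendstoUniformlyOn_iff]
  intro ε hε
  filter_upwards [hbound.eventually (gt_mem_nhds hε)] with n hn x hx
  rw [dist_comm]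
  exact (dist_le_of_le_geometric_of_tendsto r C hr (hstep x hx) (hlim x hx) n).trans_lt hn

theorem iterate_ne_zero {M : Type*} [Zero M] {f : M → M} (hf : ∀ Y, f Y = 0 → Y = 0)
    {X : M} (hX : X ≠ 0) (n : ℕ) : f^[n] X ≠ 0 := by
  induction n with
  | zero => exact hX
  | succ n ih =>
    rw [Function.iterate_succ_apply']
    exact fun h => ih (hf _ h)

theorem continuousOn_iterate_uncurry {T X : Type*} [TopologicalSpace T] [TopologicalSpace X]
    {f : T → X → X} {K : Set T} (hf : ContinuousOn (fun p : T × X => f p.1 p.2) (K ×ˢ univ))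
    (n : ℕ) : ContinuousOn (fun p : T × X => (f p.1)^[n] p.2) (K ×ˢ univ) := by
  induction n with
  | zero => exact continuousOn_snd
  | succ n ih =>
    simp only [Function.iterate_succ_apply']
    exact hf.comp (continuousOn_fst.prodMk ih) fun p hp => ⟨hp.1, mem_univ _⟩

theorem norm_apply_eq_of_homogeneous {𝕜 E : Type*} [RCLike 𝕜] [NormedAddCommGroup E]
    [NormedSpace 𝕜 E] {g : E → E} {d : ℕ} (hg : ∀ (a : 𝕜) Y, g (a • Y) = a ^ d • g Y)
    {Y : E} (hY : Y ≠ 0) : ‖g Y‖ = ‖Y‖ ^ d * ‖g ((‖Y‖⁻¹ : 𝕜) • Y)‖ := by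
  have hnorm : (‖Y‖ : 𝕜) ≠ 0 := by simpa using hY
  conv_lhs => rw [← inv_smul_smul₀ hnorm Y, smul_comm, hg]
  rw [norm_smul, norm_pow, RCLike.norm_ofReal, abs_norm]

theorem IsCompact.exists_abs_log_norm_sub_le {𝕜 T E : Type*} [RCLike 𝕜] [TopologicalSpace T]
    [NormedAddCommGroup E] [NormedSpace 𝕜 E] [ProperSpace E] {f : T → E → E} {K : Set T}
    (hK : IsCompact K) {d : ℕ}
    (hcont : ContinuousOn (fun p : T × E => f p.1 p.2) (K ×ˢ Metric.sphere 0 1))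
    (hhom : ∀ t ∈ K, ∀ (a : 𝕜) Y, f t (a • Y) = a ^ d • f t Y)
    (hzero : ∀ t ∈ K, ∀ Y, f t Y = 0 → Y = 0) :
    ∃ C, ∀ t ∈ K, ∀ Y ≠ 0, |Real.log ‖f t Y‖ - d * Real.log ‖Y‖| ≤ C := by
  have hne : ∀ p ∈ K ×ˢ Metric.sphere (0 : E) 1, ‖f p.1 p.2‖ ≠ 0 := fun p hp h =>
    ne_zero_of_mem_unit_sphere ⟨p.2, hp.2⟩ (hzero p.1 hp.1 _ (norm_eq_zero.1 h))
  obtain ⟨C, hC⟩ := (hK.prod (isCompact_sphere 0 1)).exists_bound_of_continuousOn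
    (hcont.norm.log hne)
  refine ⟨C, fun t ht Y hY => ?_⟩
  have hYs : (‖Y‖⁻¹ : 𝕜) • Y ∈ Metric.sphere (0 : E) 1 := by
    simpa using norm_smul_inv_norm (𝕜 := 𝕜) hY
  have hYd : ‖Y‖ ^ d ≠ 0 := pow_ne_zero _ (norm_ne_zero_iff.2 hY)
  rw [norm_apply_eq_of_homogeneous (hhom t ht) hY, Real.log_mul hYd (hne (t, _) ⟨ht, hYs⟩),
    Real.log_pow, add_sub_cancel_left, ← Real.norm_eq_abs]
  exact hC (t, _) ⟨ht, hYs⟩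

theorem dist_log_norm_iterate_div_pow_le {E : Type*} [NormedAddCommGroup E] {f : E → E}
    {d C : ℝ} (hd : 0 < d) (hf : ∀ Y ≠ 0, |Real.log ‖f Y‖ - d * Real.log ‖Y‖| ≤ C)
    (hzero : ∀ Y, f Y = 0 → Y = 0) {X : E} (hX : X ≠ 0) (n : ℕ) :
    dist (Real.log ‖f^[n] X‖ / d ^ n) (Real.log ‖f^[n + 1] X‖ / d ^ (n + 1)) ≤
      C / d * d⁻¹ ^ n := by
  set Y := f^[n] X
  have hstep : Real.log ‖f Y‖ / d ^ (n + 1) - Real.log ‖Y‖ / d ^ n =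
      (Real.log ‖f Y‖ - d * Real.log ‖Y‖) / d ^ (n + 1) := by
    field_simp
    ring
  calc dist (Real.log ‖Y‖ / d ^ n) (Real.log ‖f^[n + 1] X‖ / d ^ (n + 1))
      = |Real.log ‖f Y‖ - d * Real.log ‖Y‖| / d ^ (n + 1) := by
        rw [Function.iterate_succ_apply', Real.dist_eq, abs_sub_comm, hstep, abs_div,
          abs_of_pos (pow_pos hd _)]
    _ ≤ C / d ^ (n + 1) := by gcongr; exact hf Y (iterate_ne_zero hzero hX n)
    _ = C / d * d⁻¹ ^ n := by rw [pow_succ, inv_pow]; field_simp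

theorem tendstoUniformlyOn_log_norm_iterate_div_pow {T E : Type*} [NormedAddCommGroup E]
    {f : T → E → E} {K : Set T} {d C : ℝ} (hd : 1 < d)
    (hf : ∀ t ∈ K, ∀ Y ≠ 0, |Real.log ‖f t Y‖ - d * Real.log ‖Y‖| ≤ C)
    (hzero : ∀ t ∈ K, ∀ Y, f t Y = 0 → Y = 0) {G : T → E → ℝ}
    (hG : ∀ t ∈ K, ∀ X ≠ 0,
      Tendsto (fun n : ℕ => Real.log ‖(f t)^[n] X‖ / d ^ n) atTop (𝓝 (G t X))) :
    TendstoUniformlyOn (fun n (p : T × E) => Real.log ‖(f p.1)^[n] p.2‖ / d ^ n)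
      (fun p => G p.1 p.2) atTop (K ×ˢ {X | X ≠ 0}) :=
  tendstoUniformlyOn_of_dist_le_geometric (inv_nonneg.2 (by linarith))
    (inv_lt_one_of_one_lt₀ hd)
    (fun p hp =>
      dist_log_norm_iterate_div_pow_le (by linarith) (hf p.1 hp.1) (hzero p.1 hp.1) hp.2)
    fun p hp => hG p.1 hp.1 p.2 hp.2

theorem IsCompact.continuousOn_of_tendsto_log_norm_iterate_div_pow {𝕜 T E : Type*} [RCLike 𝕜]
    [TopologicalSpace T] [NormedAddCommGroup E] [NormedSpace 𝕜 E] [ProperSpace E]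
    {f : T → E → E} {K : Set T} (hK : IsCompact K) {d : ℕ} (hd : 1 < d)
    (hcont : ContinuousOn (fun p : T × E => f p.1 p.2) (K ×ˢ univ))
    (hhom : ∀ t ∈ K, ∀ (a : 𝕜) Y, f t (a • Y) = a ^ d • f t Y)
    (hzero : ∀ t ∈ K, ∀ Y, f t Y = 0 → Y = 0) {G : T → E → ℝ}
    (hG : ∀ t ∈ K, ∀ X ≠ 0,
      Tendsto (fun n : ℕ => Real.log ‖(f t)^[n] X‖ / (d : ℝ) ^ n) atTop (𝓝 (G t X))) :
    ContinuousOn (fun p : T × E => G p.1 p.2) (K ×ˢ {X | X ≠ 0}) := by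
  obtain ⟨C, hC⟩ := hK.exists_abs_log_norm_sub_le
    (hcont.mono (prod_mono_right (subset_univ _))) hhom hzero
  refine (tendstoUniformlyOn_log_norm_iterate_div_pow (by exact_mod_cast hd) hC hzero
    hG).continuousOn (Frequently.of_forall fun n => ?_)
  refine (((continuousOn_iterate_uncurry hcont n).mono (prod_mono_right (subset_univ _))).norm.log
    fun p hp => ?_).div_const _
  exact norm_ne_zero_iff.2 (iterate_ne_zero (hzero p.1 hp.1) hp.2 n)

theorem famLift_smul (c : Fin 2 → Fin 5 → ℂ → ℂ) (t a : ℂ) (X : ℂ × ℂ) :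
    famLift c t (a • X) = a ^ 4 • famLift c t X := by
  have hterm : ∀ (b x y : ℂ) (j : Fin 5),
      b * (a * x) ^ (j : ℕ) * (a * y) ^ (4 - (j : ℕ)) =
        a ^ 4 * (b * x ^ (j : ℕ) * y ^ (4 - (j : ℕ))) := by
    intro b x y j
    have h4 : a ^ 4 = a ^ (j : ℕ) * a ^ (4 - (j : ℕ)) := by
      rw [← pow_add, Nat.add_sub_cancel' (Nat.le_of_lt_succ j.is_lt)]
    rw [h4, mul_pow, mul_pow]
    ring
  simp only [famLift, Prod.smul_fst, Prod.smul_snd, Prod.smul_mk, smul_eq_mul, hterm,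
    ← Finset.mul_sum]

theorem continuousOn_famLift {c : Fin 2 → Fin 5 → ℂ → ℂ} {U : Set ℂ}
    (hc : ∀ i j, ContinuousOn (c i j) U) :
    ContinuousOn (fun p : ℂ × (ℂ × ℂ) => famLift c p.1 p.2) (U ×ˢ univ) := by
  have hcoeff : ∀ i j, ContinuousOn (fun p : ℂ × (ℂ × ℂ) => c i j p.1) (U ×ˢ univ) :=
    fun i j => (hc i j).comp continuousOn_fst fun p hp => hp.1
  unfold famLift
  apply ContinuousOn.prodMk <;>
  · refine continuousOn_finsetSum _ fun j _ => ?_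
    exact ((hcoeff _ j).mul (by fun_prop)).mul (by fun_prop)

/-- Let `U ⊆ ℂ` be open and, for each `t ∈ U`, let `F_t : ℂ² → ℂ²` be a pair of homogeneous
degree-4 polynomials with coefficients holomorphic in `t`, such that for every `t ∈ U` the
only common zero of `F_t` in `ℂ²` is `(0,0)`.  Then `(t, z, w) ↦ G_{F_t}(z,w)` is continuous
on `U × (ℂ² ∖ {(0,0)})`, where `G_{F_t}(X) = lim_n 4^{−n} log ‖F_tⁿ(X)‖`. -/
theorem escape_rate_continuous (U : Set ℂ) (hU : IsOpen U)
    (c : Fin 2 → Fin 5 → ℂ → ℂ) (hc : ∀ i j, DifferentiableOn ℂ (c i j) U)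
    (hzero : ∀ t ∈ U, ∀ X : ℂ × ℂ, famLift c t X = 0 → X = 0)
    (G : ℂ → ℂ × ℂ → ℝ)
    (hG : ∀ t ∈ U, ∀ X : ℂ × ℂ, X ≠ 0 →
      Tendsto (fun n : ℕ => Real.log ‖(famLift c t)^[n] X‖ / 4 ^ n) atTop (nhds (G t X))) :
    ContinuousOn (fun p : ℂ × (ℂ × ℂ) => G p.1 p.2) (U ×ˢ {X : ℂ × ℂ | X ≠ 0}) := by
  intro p hp
  obtain ⟨r, hr, hrU⟩ := Metric.nhds_basis_closedBall.mem_iff.1 (hU.mem_nhds hp.1)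
  have hcont : ContinuousOn (fun q : ℂ × (ℂ × ℂ) => G q.1 q.2)
      (Metric.closedBall p.1 r ×ˢ {X | X ≠ 0}) :=
    (isCompact_closedBall p.1 r).continuousOn_of_tendsto_log_norm_iterate_div_pow (𝕜 := ℂ)
      (d := 4) (by norm_num)
      ((continuousOn_famLift fun i j => (hc i j).continuousOn).mono (prod_mono_left hrU))
      (fun t _ => famLift_smul c t) (fun t ht => hzero t (hrU ht))
      (fun t ht X hX => by exact_mod_cast hG t (hrU ht) X hX)
  exact (hcont.continuousAt (prod_mem_nhds (Metric.closedBall_mem_nhds _ hr)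
    (isOpen_compl_singleton.mem_nhds hp.2))).continuousWithinAt
end

section
/- Let U ⊆ ℂ be an open neighborhood of t₀, and let ψ, w : U → ℂ be holomorphic functions, neither identically zero on any neighborhood of t₀, such that N := ord_{t₀} ψ ≥ 1 and m := ord_{t₀} w satisfies 0 ≤ m ≤ N/2. Then for all t ≠ t₀ sufficiently close to t₀, the series Σ_{n≥1} log |(1 − ψ(t)ⁿ·w(t))·(1 − ψ(t)ⁿ·w(t)^{−1})| converges absolutely, and its sum tends to 0 as t → t₀ through values t ≠ t₀. -/
open Filter
open scoped Topology

/-!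
Write `p = ψ t` and `q = w t`. As `t → t₀` the quantities `p`, `p q` and `p q⁻¹` tend to `0`,
since they vanish at `t₀` to the orders `N`, `N + m` and `N - m ≥ 1`. Once all three are at most
`1/2`, the bound `|log ‖1 - z‖| ≤ (3/2)‖z‖` applied to `z = pⁿ⁺¹q` and `z = pⁿ⁺¹q⁻¹` dominates the
`n`-th term by `(3/2)(‖p q‖ + ‖p q⁻¹‖)‖p‖ⁿ`, a geometric series whose sum tends to `0`.
-/

namespace Complex

lemma abs_log_norm_one_sub_le {z : ℂ} (hz : ‖z‖ ≤ 1 / 2) :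
    |Real.log ‖1 - z‖| ≤ 3 / 2 * ‖z‖ := by
  calc |Real.log ‖1 - z‖| = |(log (1 + -z)).re| := by rw [log_re, sub_eq_add_neg]
    _ ≤ ‖log (1 + -z)‖ := abs_re_le_norm _
    _ ≤ 3 / 2 * ‖z‖ := by simpa using norm_log_one_add_half_le_self (z := -z) (by simpa using hz)

lemma norm_one_sub_ne_zero {z : ℂ} (hz : ‖z‖ ≤ 1 / 2) : ‖1 - z‖ ≠ 0 := by
  refine norm_ne_zero_iff.mpr fun h => ?_
  rw [← sub_eq_zero.mp h, norm_one] at hz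
  norm_num at hz

lemma abs_log_norm_one_sub_mul_one_sub_le {x y : ℂ} (hx : ‖x‖ ≤ 1 / 2) (hy : ‖y‖ ≤ 1 / 2) :
    |Real.log ‖(1 - x) * (1 - y)‖| ≤ 3 / 2 * (‖x‖ + ‖y‖) := by
  rw [norm_mul, Real.log_mul (norm_one_sub_ne_zero hx) (norm_one_sub_ne_zero hy)]
  linarith [abs_add_le (Real.log ‖1 - x‖) (Real.log ‖1 - y‖),
    abs_log_norm_one_sub_le hx, abs_log_norm_one_sub_le hy]

end Complex

lemma summable_abs_and_abs_tsum_le_of_le_geometric {f : ℕ → ℝ} {C r : ℝ} (hr₀ : 0 ≤ r)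
    (hr : r ≤ 1 / 2) (hf : ∀ n, |f n| ≤ C * r ^ n) :
    Summable (fun n => |f n|) ∧ |∑' n, f n| ≤ 2 * C := by
  have hgeom : HasSum (fun n => C * r ^ n) (C * (1 - r)⁻¹) :=
    (hasSum_geometric_of_lt_one hr₀ (by linarith)).mul_left C
  have hC : 0 ≤ C := by simpa using (abs_nonneg (f 0)).trans (hf 0)
  refine ⟨.of_nonneg_of_le (fun n => abs_nonneg _) hf hgeom.summable, ?_⟩
  calc |∑' n, f n| ≤ C * (1 - r)⁻¹ := tsum_of_norm_bounded (f := f) hgeom hf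
    _ ≤ C * 2 := by
      gcongr
      rw [inv_le_comm₀ (by linarith) (by norm_num)]
      linarith
    _ = 2 * C := mul_comm _ _

lemma abs_log_norm_one_sub_pow_mul_le {p q : ℂ} (hp : ‖p‖ ≤ 1) (hpq : ‖p * q‖ ≤ 1 / 2)
    (hpq' : ‖p * q⁻¹‖ ≤ 1 / 2) (n : ℕ) :
    |Real.log ‖(1 - p ^ (n + 1) * q) * (1 - p ^ (n + 1) * q⁻¹)‖|
      ≤ 3 / 2 * (‖p * q‖ + ‖p * q⁻¹‖) * ‖p‖ ^ n := by
  have hnorm (a : ℂ) : ‖p ^ (n + 1) * a‖ = ‖p‖ ^ n * ‖p * a‖ := by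
    rw [pow_succ, mul_assoc, norm_mul, norm_pow]
  have hsmall {a : ℂ} (ha : ‖p * a‖ ≤ 1 / 2) : ‖p ^ (n + 1) * a‖ ≤ 1 / 2 := by
    rw [hnorm]
    exact (mul_le_of_le_one_left (norm_nonneg _) (pow_le_one₀ (norm_nonneg _) hp)).trans ha
  calc _ ≤ 3 / 2 * (‖p ^ (n + 1) * q‖ + ‖p ^ (n + 1) * q⁻¹‖) :=
        Complex.abs_log_norm_one_sub_mul_one_sub_le (hsmall hpq) (hsmall hpq')
    _ = _ := by rw [hnorm, hnorm]; ring

lemma summable_and_tendsto_tsum_log_norm_one_sub_pow_mul {α : Type*} {l : Filter α}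
    {p q : α → ℂ} (hp : Tendsto p l (𝓝 0)) (hpq : Tendsto (fun t => p t * q t) l (𝓝 0))
    (hpq' : Tendsto (fun t => p t * (q t)⁻¹) l (𝓝 0)) :
    (∀ᶠ t in l, Summable fun n : ℕ =>
        |Real.log ‖(1 - p t ^ (n + 1) * q t) * (1 - p t ^ (n + 1) * (q t)⁻¹)‖|) ∧
      Tendsto (fun t => ∑' n : ℕ,
        Real.log ‖(1 - p t ^ (n + 1) * q t) * (1 - p t ^ (n + 1) * (q t)⁻¹)‖) l (𝓝 0) := by
  have eventually_norm_le_half {f : α → ℂ} (hf : Tendsto f l (𝓝 0)) : ∀ᶠ t in l, ‖f t‖ ≤ 1 / 2 :=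
    (tendsto_zero_iff_norm_tendsto_zero.mp hf).eventually (eventually_le_nhds (by norm_num))
  have summable_and_tsum_le : ∀ᶠ t in l, Summable (fun n : ℕ =>
        |Real.log ‖(1 - p t ^ (n + 1) * q t) * (1 - p t ^ (n + 1) * (q t)⁻¹)‖|) ∧
      |∑' n : ℕ, Real.log ‖(1 - p t ^ (n + 1) * q t) * (1 - p t ^ (n + 1) * (q t)⁻¹)‖|
        ≤ 3 * (‖p t * q t‖ + ‖p t * (q t)⁻¹‖) := by
    filter_upwards [eventually_norm_le_half hp, eventually_norm_le_half hpq,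
      eventually_norm_le_half hpq'] with t hp hpq hpq'
    refine (summable_abs_and_abs_tsum_le_of_le_geometric (norm_nonneg _) hp
      (abs_log_norm_one_sub_pow_mul_le (hp.trans (by norm_num)) hpq hpq')).imp_right
      fun h => h.trans_eq (by ring)
  refine ⟨summable_and_tsum_le.mono fun t ht => ht.1,
    squeeze_zero_norm' (summable_and_tsum_le.mono fun t ht => ht.2) ?_⟩
  simpa using ((tendsto_zero_iff_norm_tendsto_zero.mp hpq).add
    (tendsto_zero_iff_norm_tendsto_zero.mp hpq')).const_mul (3 : ℝ)

lemma tendsto_sub_pow_mul_nhdsNE_zero {f g : ℂ → ℂ} {t₀ : ℂ} {k : ℕ} (hk : k ≠ 0)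
    (hg : ContinuousAt g t₀) (hf : ∀ᶠ t in 𝓝[≠] t₀, f t = (t - t₀) ^ k * g t) :
    Tendsto f (𝓝[≠] t₀) (𝓝 0) := by
  have hcont : ContinuousAt (fun t => (t - t₀) ^ k * g t) t₀ := by fun_prop
  refine Tendsto.congr' (hf.mono fun t ht => ht.symm) (tendsto_nhdsWithin_of_tendsto_nhds ?_)
  simpa [zero_pow hk] using hcont.tendsto

theorem tail_series_tendsto_zero_general (t₀ : ℂ)
    (ψ w : ℂ → ℂ)
    (N m : ℕ) (hN : 1 ≤ N) (hm : 2 * m ≤ N)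
    (gψ gw : ℂ → ℂ) (hgψ : AnalyticAt ℂ gψ t₀)
    (hgw : AnalyticAt ℂ gw t₀) (hgw0 : gw t₀ ≠ 0)
    (hψfac : ∀ᶠ t in 𝓝 t₀, ψ t = (t - t₀) ^ N * gψ t)
    (hwfac : ∀ᶠ t in 𝓝 t₀, w t = (t - t₀) ^ m * gw t) :
    (∀ᶠ t in 𝓝[≠] t₀, Summable (fun n : ℕ =>
        |Real.log (‖(1 - ψ t ^ (n + 1) * w t) *
          (1 - ψ t ^ (n + 1) * (w t)⁻¹)‖)|)) ∧
      Tendsto (fun t : ℂ => ∑' n : ℕ,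
          Real.log (‖(1 - ψ t ^ (n + 1) * w t) *
            (1 - ψ t ^ (n + 1) * (w t)⁻¹)‖))
        (𝓝[≠] t₀) (nhds 0) := by
  have hψ' := hψfac.filter_mono (nhdsWithin_le_nhds (s := {t₀}ᶜ))
  have hw' := hwfac.filter_mono (nhdsWithin_le_nhds (s := {t₀}ᶜ))
  refine summable_and_tendsto_tsum_log_norm_one_sub_pow_mul
    (tendsto_sub_pow_mul_nhdsNE_zero (by omega) hgψ.continuousAt hψ')
    (tendsto_sub_pow_mul_nhdsNE_zero (k := N + m) (by omega)
      (hgψ.continuousAt.mul hgw.continuousAt) ?_)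
    (tendsto_sub_pow_mul_nhdsNE_zero (k := N - m) (by omega)
      (hgψ.continuousAt.mul (hgw.continuousAt.inv₀ hgw0)) ?_)
  · filter_upwards [hψ', hw'] with t hψt hwt
    rw [hψt, hwt, pow_add, Pi.mul_apply]
    ring
  · filter_upwards [hψ', hw', self_mem_nhdsWithin] with t hψt hwt (ht : t ≠ t₀)
    rw [hψt, hwt, ← Nat.sub_add_cancel (show m ≤ N by omega), pow_add, Nat.add_sub_cancel,
      Pi.mul_apply, Pi.inv_apply]
    field_simp [sub_ne_zero.mpr ht]

/-- Let `U ⊆ ℂ` be an open neighborhood of `t₀` and `ψ, w : U → ℂ` holomorphic, neither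
identically zero near `t₀`, with `N := ord_{t₀} ψ ≥ 1` and `m := ord_{t₀} w` satisfying
`0 ≤ m ≤ N/2` (the orders are encoded by factorizations `ψ(t) = (t−t₀)^N gψ(t)` and
`w(t) = (t−t₀)^m g_w(t)` with `gψ, g_w` analytic and nonvanishing at `t₀`).  Then for all
`t ≠ t₀` sufficiently close to `t₀` the series
`Σ_{n≥1} log |(1 − ψ(t)ⁿ w(t))(1 − ψ(t)ⁿ w(t)⁻¹)|` converges absolutely, and its sum tends
to `0` as `t → t₀` through values `t ≠ t₀`. -/
theorem tail_series_tendsto_zero (U : Set ℂ) (hU : IsOpen U) (t₀ : ℂ) (ht₀ : t₀ ∈ U)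
    (ψ w : ℂ → ℂ) (hψ : DifferentiableOn ℂ ψ U) (hw : DifferentiableOn ℂ w U)
    (N m : ℕ) (hN : 1 ≤ N) (hm : 2 * m ≤ N)
    (gψ gw : ℂ → ℂ) (hgψ : AnalyticAt ℂ gψ t₀) (hgψ0 : gψ t₀ ≠ 0)
    (hgw : AnalyticAt ℂ gw t₀) (hgw0 : gw t₀ ≠ 0)
    (hψfac : ∀ᶠ t in 𝓝 t₀, ψ t = (t - t₀) ^ N * gψ t)
    (hwfac : ∀ᶠ t in 𝓝 t₀, w t = (t - t₀) ^ m * gw t) :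
    (∀ᶠ t in 𝓝[≠] t₀, Summable (fun n : ℕ =>
        |Real.log (‖(1 - ψ t ^ (n + 1) * w t) *
          (1 - ψ t ^ (n + 1) * (w t)⁻¹)‖)|)) ∧
      Tendsto (fun t : ℂ => ∑' n : ℕ,
          Real.log (‖(1 - ψ t ^ (n + 1) * w t) *
            (1 - ψ t ^ (n + 1) * (w t)⁻¹)‖))
        (𝓝[≠] t₀) (nhds 0) :=
  tail_series_tendsto_zero_general t₀ ψ w N m hN hm gψ gw hgψ hgw hgw0 hψfac hwfac
end

section
/- Let K be a field complete with respect to a nontrivial nonarchimedean multiplicative absolute value |·|, and let F = (F₁, F₂) with F₁, F₂ ∈ K[z,w] homogeneous of degree 4 whose only common zero in L² is (0,0) for every field extension L of K with an absolute value extending |·| (equivalently, F₁ and F₂ have no common zero other than (0,0) over an algebraic closure of K). Write ‖(z,w)‖ = max(|z|, |w|). Then for every X ∈ K² ∖ {(0,0)} the limit G_F(X) = lim_{n→∞} 4^{−n} log ‖Fⁿ(X)‖ exists, there is a constant C ≥ 0 with |G_F(X) − log ‖X‖| ≤ C for all X ≠ (0,0), and G_F(αX) = G_F(X) + log |α| for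 every α ∈ K with α ≠ 0. -/
open MvPolynomial Filter

/-!
On the chart `|w| ≤ |z|` one has `F₁(z, w) = z⁴ p(w/z)` and `F₂(z, w) = z⁴ q(w/z)`, where `p, q`
have no common root in the algebraic closure and are therefore coprime. A Bézout identity
`a p + b q = 1` bounds `max(|p(t)|, |q(t)|)` below on the unit disc, so with the other chart
`c ‖X‖⁴ ≤ ‖F X‖ ≤ M ‖X‖⁴`, i.e. `log ‖F X‖ = 4 log ‖X‖ + O(1)`. Hence the increments of
`4⁻ⁿ log ‖Fⁿ X‖` decay geometrically: the sequence converges, its limit stays within `O(1)` of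
`log ‖X‖`, and `Fⁿ(αX) = α^(4ⁿ) Fⁿ(X)` gives the scaling law.
-/

universe u

theorem Matrix.vecCons_comp_swap {α : Type*} (z w : α) :
    ![z, w] ∘ Equiv.swap 0 1 = ![w, z] := by
  funext i
  fin_cases i <;> simp

namespace Polynomial

theorem exists_norm_eval_le_of_norm_le_one {R : Type*} [SeminormedRing R] [NormOneClass R]
    (p : R[X]) : ∃ M : ℝ, 0 < M ∧ ∀ t : R, ‖t‖ ≤ 1 → ‖p.eval t‖ ≤ M := by
  refine ⟨1 + ∑ i ∈ Finset.range (p.natDegree + 1), ‖p.coeff i‖, by positivity, fun t ht => ?_⟩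
  rw [eval_eq_sum_range]
  calc ‖∑ i ∈ Finset.range (p.natDegree + 1), p.coeff i * t ^ i‖
      ≤ ∑ i ∈ Finset.range (p.natDegree + 1), ‖p.coeff i‖ * ‖t‖ ^ i :=
        norm_sum_le_of_le _ fun i _ => norm_mul_le_of_le le_rfl (norm_pow_le t i)
    _ ≤ ∑ i ∈ Finset.range (p.natDegree + 1), ‖p.coeff i‖ :=
        Finset.sum_le_sum fun i _ =>
          mul_le_of_le_one_right (norm_nonneg _) (pow_le_one₀ (norm_nonneg _) ht)
    _ ≤ _ := le_add_of_nonneg_left zero_le_one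

theorem exists_pos_le_max_norm_eval_of_isCoprime {R : Type*} [SeminormedCommRing R]
    [NormOneClass R] {p q : R[X]} (h : IsCoprime p q) :
    ∃ c : ℝ, 0 < c ∧ ∀ t : R, ‖t‖ ≤ 1 → c ≤ max ‖p.eval t‖ ‖q.eval t‖ := by
  obtain ⟨a, b, hab⟩ := h
  obtain ⟨Ma, hMa, ha⟩ := exists_norm_eval_le_of_norm_le_one a
  obtain ⟨Mb, hMb, hb⟩ := exists_norm_eval_le_of_norm_le_one b
  refine ⟨1 / (Ma + Mb), by positivity, fun t ht => ?_⟩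
  set m := max ‖p.eval t‖ ‖q.eval t‖
  have hone : a.eval t * p.eval t + b.eval t * q.eval t = 1 := by
    simpa using congrArg (eval t) hab
  have hbezout : 1 ≤ (Ma + Mb) * m :=
    calc (1 : ℝ) = ‖a.eval t * p.eval t + b.eval t * q.eval t‖ := by rw [hone, norm_one]
      _ ≤ ‖a.eval t‖ * ‖p.eval t‖ + ‖b.eval t‖ * ‖q.eval t‖ :=
        norm_add_le_of_le (norm_mul_le _ _) (norm_mul_le _ _)
      _ ≤ Ma * m + Mb * m := by
        gcongr
        exacts [ha t ht, le_max_left _ _, hb t ht, le_max_right _ _]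
      _ = (Ma + Mb) * m := by ring
  rwa [div_le_iff₀ (by positivity), mul_comm]

end Polynomial

namespace MvPolynomial

theorem IsHomogeneous.eval_smul_s14 {R σ : Type*} [CommSemiring R] [Fintype σ]
    {P : MvPolynomial σ R} {n : ℕ} (hP : P.IsHomogeneous n) (c : R) (x : σ → R) :
    eval (c • x) P = c ^ n * eval x P := by
  rw [eval_eq', eval_eq', Finset.mul_sum]
  refine Finset.sum_congr rfl fun d hd => ?_
  have hdeg : ∑ i, d i = n := by
    rw [← Finsupp.degree_eq_sum, Finsupp.degree_eq_weight_one]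
    exact hP (mem_support_iff.mp hd)
  simp only [Pi.smul_apply, smul_eq_mul, mul_pow, Finset.prod_mul_distrib,
    Finset.prod_pow_eq_pow_sum, hdeg]
  ring

noncomputable def dehomogenize {R : Type*} [CommSemiring R] (P : MvPolynomial (Fin 2) R) :
    Polynomial R :=
  aeval ![1, Polynomial.X] P

theorem aeval_dehomogenize {R A : Type*} [CommSemiring R] [CommSemiring A] [Algebra R A]
    (P : MvPolynomial (Fin 2) R) (t : A) :
    Polynomial.aeval t P.dehomogenize = aeval ![1, t] P := by
  rw [dehomogenize, comp_aeval_apply]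
  congr
  funext i
  fin_cases i <;> simp

theorem eval_dehomogenize {R : Type*} [CommSemiring R] (P : MvPolynomial (Fin 2) R) (t : R) :
    P.dehomogenize.eval t = eval ![1, t] P := by
  simpa using aeval_dehomogenize P t

theorem IsHomogeneous.eval_eq_pow_mul_eval_dehomogenize {K : Type*} [Field K]
    {P : MvPolynomial (Fin 2) K} {n : ℕ} (hP : P.IsHomogeneous n) {z : K} (hz : z ≠ 0)
    (w : K) : eval ![z, w] P = z ^ n * P.dehomogenize.eval (w / z) := by
  have hzw : ![z, w] = z • ![1, w / z] := by
    funext i; fin_cases i <;> simp [mul_div_cancel₀, hz]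
  rw [hzw, hP.eval_smul_s14, eval_dehomogenize]


theorem exists_bounds_max_norm_eval_of_norm_le {K : Type u} [NormedField K] (L : Type u)
    [Field L] [IsAlgClosed L] [Algebra K L] {P Q : MvPolynomial (Fin 2) K} {n : ℕ}
    (hP : P.IsHomogeneous n) (hQ : Q.IsHomogeneous n)
    (hPQ : ∀ t : L, aeval ![1, t] P ≠ 0 ∨ aeval ![1, t] Q ≠ 0) :
    ∃ c M : ℝ, 0 < c ∧ ∀ z w : K, z ≠ 0 → ‖w‖ ≤ ‖z‖ →
      c * ‖z‖ ^ n ≤ max ‖eval ![z, w] P‖ ‖eval ![z, w] Q‖ ∧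
      max ‖eval ![z, w] P‖ ‖eval ![z, w] Q‖ ≤ M * ‖z‖ ^ n := by
  have hcop : IsCoprime P.dehomogenize Q.dehomogenize := by
    refine (Polynomial.isCoprime_iff_aeval_ne_zero_of_isAlgClosed K L _ _).mpr ?_
    simpa only [aeval_dehomogenize] using hPQ
  obtain ⟨c, hc, hlow⟩ := Polynomial.exists_pos_le_max_norm_eval_of_isCoprime hcop
  obtain ⟨MP, -, hMP⟩ := P.dehomogenize.exists_norm_eval_le_of_norm_le_one
  obtain ⟨MQ, -, hMQ⟩ := Q.dehomogenize.exists_norm_eval_le_of_norm_le_one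
  refine ⟨c, max MP MQ, hc, fun z w hz hwz => ?_⟩
  have ht : ‖w / z‖ ≤ 1 := by
    rw [norm_div]
    exact div_le_one_of_le₀ hwz (norm_nonneg _)
  rw [hP.eval_eq_pow_mul_eval_dehomogenize hz, hQ.eval_eq_pow_mul_eval_dehomogenize hz,
    norm_mul, norm_mul, norm_pow, ← mul_max_of_nonneg _ _ (by positivity), mul_comm c,
    mul_comm _ (‖z‖ ^ n)]
  exact ⟨mul_le_mul_of_nonneg_left (hlow _ ht) (by positivity),
    mul_le_mul_of_nonneg_left (max_le_max (hMP _ ht) (hMQ _ ht)) (by positivity)⟩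

theorem exists_bounds_norm_eval_pair {K : Type u} [NormedField K] (L : Type u) [Field L]
    [IsAlgClosed L] [Algebra K L] {P Q : MvPolynomial (Fin 2) K} {n : ℕ}
    (hP : P.IsHomogeneous n) (hQ : Q.IsHomogeneous n)
    (hzero : ∀ z w : L, aeval ![z, w] P = 0 → aeval ![z, w] Q = 0 → z = 0 ∧ w = 0) :
    ∃ c M : ℝ, 0 < c ∧ ∀ X : K × K, X ≠ 0 →
      c * ‖X‖ ^ n ≤ ‖(eval ![X.1, X.2] P, eval ![X.1, X.2] Q)‖ ∧
      ‖(eval ![X.1, X.2] P, eval ![X.1, X.2] Q)‖ ≤ M * ‖X‖ ^ n := by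
  obtain ⟨c₁, M₁, hc₁, h₁⟩ := exists_bounds_max_norm_eval_of_norm_le L hP hQ fun t => by
    by_contra! h
    exact one_ne_zero (hzero 1 t h.1 h.2).1
  obtain ⟨c₂, M₂, hc₂, h₂⟩ := exists_bounds_max_norm_eval_of_norm_le L
    (hP.rename_isHomogeneous (f := Equiv.swap 0 1))
    (hQ.rename_isHomogeneous (f := Equiv.swap 0 1))
    fun t => by
      by_contra! h
      simp only [aeval_rename, Matrix.vecCons_comp_swap] at h
      exact one_ne_zero (hzero t 1 h.1 h.2).2
  refine ⟨min c₁ c₂, max M₁ M₂, lt_min hc₁ hc₂, fun X hX => ?_⟩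
  obtain ⟨x, y⟩ := X
  simp only [Prod.norm_def]
  rcases le_total ‖y‖ ‖x‖ with hyx | hxy
  · have hx : x ≠ 0 := by
      rintro rfl
      exact hX (by simpa using norm_le_zero_iff.mp (hyx.trans_eq norm_zero))
    rw [max_eq_left hyx]
    obtain ⟨hlow, hup⟩ := h₁ x y hx hyx
    constructor
    · exact (mul_le_mul_of_nonneg_right (min_le_left _ _) (by positivity)).trans hlow
    · exact hup.trans (mul_le_mul_of_nonneg_right (le_max_left _ _) (by positivity))
  · have hy : y ≠ 0 := by
      rintro rfl
      exact hX (by simpa using norm_le_zero_iff.mp (hxy.trans_eq norm_zero))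
    rw [max_eq_right hxy]
    obtain ⟨hlow, hup⟩ := h₂ y x hy hxy
    simp only [eval_rename, Matrix.vecCons_comp_swap] at hlow hup
    constructor
    · exact (mul_le_mul_of_nonneg_right (min_le_right _ _) (by positivity)).trans hlow
    · exact hup.trans (mul_le_mul_of_nonneg_right (le_max_right _ _) (by positivity))
end MvPolynomial

theorem abs_log_sub_mul_log_le {x y c M : ℝ} {d : ℕ} (hc : 0 < c) (hx : 0 < x)
    (hlow : c * x ^ d ≤ y) (hup : y ≤ M * x ^ d) :
    |Real.log y - d * Real.log x| ≤ max |Real.log c| |Real.log M| := by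
  have hxd : 0 < x ^ d := pow_pos hx d
  have hy : 0 < y := (mul_pos hc hxd).trans_le hlow
  have hM : 0 < M := pos_of_mul_pos_left (hy.trans_le hup) hxd.le
  have hlog : Real.log y - d * Real.log x = Real.log (y / x ^ d) := by
    rw [Real.log_div hy.ne' hxd.ne', Real.log_pow]
  rw [hlog, abs_le]
  constructor
  · calc -max |Real.log c| |Real.log M| ≤ -|Real.log c| := neg_le_neg (le_max_left _ _)
      _ ≤ Real.log c := neg_abs_le _
      _ ≤ Real.log (y / x ^ d) := Real.log_le_log hc ((le_div_iff₀ hxd).mpr hlow)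
  · calc Real.log (y / x ^ d) ≤ Real.log M :=
        Real.log_le_log (by positivity) ((div_le_iff₀ hxd).mpr hup)
      _ ≤ |Real.log M| := le_abs_self _
      _ ≤ _ := le_max_right _ _

theorem iterate_smul_of_homogeneous {M α : Type*} [Monoid M] [MulAction M α] {F : α → α}
    {d : ℕ} (hF : ∀ (a : M) X, F (a • X) = a ^ d • F X) (a : M) (X : α) (n : ℕ) :
    F^[n] (a • X) = a ^ d ^ n • F^[n] X := by
  induction n with
  | zero => simp
  | succ n ih =>
    rw [Function.iterate_succ_apply', Function.iterate_succ_apply', ih, hF, ← pow_mul, ← pow_succ]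

section EscapeRate

variable {E : Type*} [NormedAddCommGroup E]

noncomputable def escapeRate (F : E → E) (d : ℕ) (X : E) : ℝ :=
  limUnder atTop fun n => Real.log ‖F^[n] X‖ / (d : ℝ) ^ n

variable {F : E → E} {d : ℕ} {C : ℝ}

theorem dist_log_norm_iterate_div_pow_succ_le (hd : 0 < d)
    (hF : ∀ X, X ≠ 0 → F X ≠ 0 ∧ |Real.log ‖F X‖ - d * Real.log ‖X‖| ≤ C) {X : E} (hX : X ≠ 0)
    (n : ℕ) :
    dist (Real.log ‖F^[n] X‖ / (d : ℝ) ^ n) (Real.log ‖F^[n + 1] X‖ / (d : ℝ) ^ (n + 1)) ≤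
      C / d * (1 / d : ℝ) ^ n := by
  have hd' : (0 : ℝ) < d := Nat.cast_pos.mpr hd
  have hstep := (hF _ (Set.MapsTo.iterate (s := {0}ᶜ) (fun Y hY => (hF Y hY).1) n hX)).2
  rw [Function.iterate_succ_apply', dist_comm, Real.dist_eq]
  calc |Real.log ‖F (F^[n] X)‖ / (d : ℝ) ^ (n + 1) - Real.log ‖F^[n] X‖ / (d : ℝ) ^ n|
      = |Real.log ‖F (F^[n] X)‖ - d * Real.log ‖F^[n] X‖| / (d : ℝ) ^ (n + 1) := by
        rw [← abs_of_pos (pow_pos hd' (n + 1)), ← abs_div, abs_of_pos (pow_pos hd' (n + 1))]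
        congr 1
        field_simp
        ring
    _ ≤ C / (d : ℝ) ^ (n + 1) := by gcongr
    _ = C / d * (1 / d : ℝ) ^ n := by rw [one_div_pow, pow_succ]; field_simp

theorem tendsto_escapeRate (hd : 1 < d)
    (hF : ∀ X, X ≠ 0 → F X ≠ 0 ∧ |Real.log ‖F X‖ - d * Real.log ‖X‖| ≤ C) {X : E} (hX : X ≠ 0) :
    Tendsto (fun n => Real.log ‖F^[n] X‖ / (d : ℝ) ^ n) atTop (nhds (escapeRate F d X)) := by
  have hr : (1 / d : ℝ) < 1 := by
    rw [div_lt_one (by positivity)]; exact_mod_cast hd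
  exact (cauchySeq_of_le_geometric _ _ hr
    (dist_log_norm_iterate_div_pow_succ_le (by omega) hF hX)).tendsto_limUnder

theorem abs_escapeRate_sub_log_norm_le (hd : 1 < d)
    (hF : ∀ X, X ≠ 0 → F X ≠ 0 ∧ |Real.log ‖F X‖ - d * Real.log ‖X‖| ≤ C) {X : E} (hX : X ≠ 0) :
    |escapeRate F d X - Real.log ‖X‖| ≤ C / (d - 1) := by
  have hr : (1 / d : ℝ) < 1 := by
    rw [div_lt_one (by positivity)]; exact_mod_cast hd
  have hd' : (1 : ℝ) < d := by exact_mod_cast hd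
  have := dist_le_of_le_geometric_of_tendsto₀ _ _ hr
    (dist_log_norm_iterate_div_pow_succ_le (by omega) hF hX) (tendsto_escapeRate hd hF hX)
  rw [abs_sub_comm, ← Real.dist_eq]
  convert this using 1
  · simp
  · field_simp

theorem escapeRate_smul {K : Type*} [NormedField K] [NormedSpace K E] (hd : 1 < d)
    (hF : ∀ X, X ≠ 0 → F X ≠ 0 ∧ |Real.log ‖F X‖ - d * Real.log ‖X‖| ≤ C)
    (hhom : ∀ (a : K) X, F (a • X) = a ^ d • F X) {a : K} (ha : a ≠ 0) {X : E} (hX : X ≠ 0) :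
    escapeRate F d (a • X) = escapeRate F d X + Real.log ‖a‖ := by
  have hseq : ∀ n : ℕ, Real.log ‖F^[n] (a • X)‖ / (d : ℝ) ^ n =
      Real.log ‖F^[n] X‖ / (d : ℝ) ^ n + Real.log ‖a‖ := by
    intro n
    have hFn := Set.MapsTo.iterate (s := {0}ᶜ) (fun Y hY => (hF Y hY).1) n hX
    rw [iterate_smul_of_homogeneous hhom, norm_smul, norm_pow,
      Real.log_mul (by positivity) (norm_ne_zero_iff.mpr hFn), Real.log_pow]
    push_cast
    field_simp
    ring
  refine tendsto_nhds_unique (tendsto_escapeRate hd hF (smul_ne_zero ha hX)) ?_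
  simp only [hseq]
  exact (tendsto_escapeRate hd hF hX).add_const _

end EscapeRate

theorem nonarchimedean_escape_rate_general (K : Type*) [NontriviallyNormedField K]
    (F₁ F₂ : MvPolynomial (Fin 2) K)
    (hF₁ : F₁.IsHomogeneous 4) (hF₂ : F₂.IsHomogeneous 4)
    (hzero : ∀ z w : AlgebraicClosure K,
      aeval ![z, w] F₁ = 0 → aeval ![z, w] F₂ = 0 → z = 0 ∧ w = 0)
    (F : K × K → K × K)
    (hF : ∀ X : K × K, F X = (eval ![X.1, X.2] F₁, eval ![X.1, X.2] F₂)) :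
    ∃ G : K × K → ℝ,
      (∀ X : K × K, X ≠ 0 →
        Tendsto (fun n : ℕ => Real.log ‖F^[n] X‖ / 4 ^ n) atTop (nhds (G X))) ∧
      (∃ C : ℝ, 0 ≤ C ∧ ∀ X : K × K, X ≠ 0 → |G X - Real.log ‖X‖| ≤ C) ∧
      ∀ α : K, α ≠ 0 → ∀ X : K × K, X ≠ 0 →
        G (α * X.1, α * X.2) = G X + Real.log ‖α‖ := by
  obtain ⟨c, M, hc, hbounds⟩ := exists_bounds_norm_eval_pair (AlgebraicClosure K) hF₁ hF₂ hzero
  set C := max |Real.log c| |Real.log M|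
  have hlog : ∀ X : K × K, X ≠ 0 →
      F X ≠ 0 ∧ |Real.log ‖F X‖ - ((4 : ℕ) : ℝ) * Real.log ‖X‖| ≤ C := by
    intro X hX
    obtain ⟨hlow, hup⟩ := hbounds X hX
    rw [← hF] at hlow hup
    have hXpos : 0 < ‖X‖ := norm_pos_iff.mpr hX
    exact ⟨norm_pos_iff.mp ((mul_pos hc (pow_pos hXpos 4)).trans_le hlow),
      abs_log_sub_mul_log_le hc hXpos hlow hup⟩
  have hhom : ∀ (a : K) (X : K × K), F (a • X) = a ^ 4 • F X := by
    intro a X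
    have hsmul : ![a * X.1, a * X.2] = a • ![X.1, X.2] := by
      funext i
      fin_cases i <;> simp
    simp only [hF, Prod.smul_fst, Prod.smul_snd, smul_eq_mul, hsmul, hF₁.eval_smul_s14,
      hF₂.eval_smul_s14, Prod.smul_mk]
  refine ⟨escapeRate F 4, fun X hX => ?_,
    ⟨C / ((4 : ℕ) - 1), div_nonneg (le_max_of_le_left (abs_nonneg _)) (by norm_num),
      fun X hX => abs_escapeRate_sub_log_norm_le (by norm_num) hlog hX⟩,
    fun α hα X hX => escapeRate_smul (by norm_num) hlog hhom hα hX⟩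
  simpa using tendsto_escapeRate (by norm_num) hlog hX

/-- Let `K` be a field complete with respect to a nontrivial nonarchimedean multiplicative
absolute value, and let `F = (F₁, F₂)` with `F₁, F₂ ∈ K[z,w]` homogeneous of degree 4 having
no common zero other than `(0,0)` over an algebraic closure of `K`.  Then for every
`X ∈ K² ∖ {(0,0)}` the limit `G_F(X) = lim_n 4^{−n} log ‖Fⁿ(X)‖` exists (with
`‖(z,w)‖ = max (|z|, |w|)`), there is `C ≥ 0` with `|G_F(X) − log ‖X‖| ≤ C` for all
`X ≠ (0,0)`, and `G_F(αX) = G_F(X) + log |α|` for every `α ≠ 0`. -/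
theorem nonarchimedean_escape_rate (K : Type*) [NontriviallyNormedField K]
    [IsUltrametricDist K] [CompleteSpace K]
    (F₁ F₂ : MvPolynomial (Fin 2) K)
    (hF₁ : F₁.IsHomogeneous 4) (hF₂ : F₂.IsHomogeneous 4)
    (hzero : ∀ z w : AlgebraicClosure K,
      aeval ![z, w] F₁ = 0 → aeval ![z, w] F₂ = 0 → z = 0 ∧ w = 0)
    (F : K × K → K × K)
    (hF : ∀ X : K × K, F X = (eval ![X.1, X.2] F₁, eval ![X.1, X.2] F₂)) :
    ∃ G : K × K → ℝ,
      (∀ X : K × K, X ≠ 0 →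
        Tendsto (fun n : ℕ => Real.log ‖F^[n] X‖ / 4 ^ n) atTop (nhds (G X))) ∧
      (∃ C : ℝ, 0 ≤ C ∧ ∀ X : K × K, X ≠ 0 → |G X - Real.log ‖X‖| ≤ C) ∧
      ∀ α : K, α ≠ 0 → ∀ X : K × K, X ≠ 0 →
        G (α * X.1, α * X.2) = G X + Real.log ‖α‖ :=
  nonarchimedean_escape_rate_general K F₁ F₂ hF₁ hF₂ hzero F hF
end
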